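/- arXiv:2203.13578 — 3 statements merged into one kernel-verified Lean document; each statement's English description precedes it below -/
import Mathlib

section
/- If λ is a zero of B_{N+1}, then the row vector (B^{[1]}_{N+1}(λ), B^{[2]}_{N+1}(λ), …, B^{[N+1]}_{N+1}(λ)) is a left eigenvector of T^{[N]} with eigenvalue λ, and its last entry equals 1. -/
open Polynomial

noncomputable def truncM (T : ℕ → ℕ → ℝ) (N : ℕ) : Matrix (Fin (N + 1)) (Fin (N + 1)) ℝ :=
  Matrix.of fun i j : Fin (N + 1) => T (i : ℕ) (j : ℕ)

noncomputable def Btr (T : ℕ → ℕ → ℝ) (N k : ℕ) : Polynomial ℝ :=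
  if k ≤ N + 1 then
    (Matrix.of fun i j : Fin (N + 1 - k) => T (k + (i : ℕ)) (k + (j : ℕ))).charpoly
  else 0

/-
Put `M(x) = x - T^{[N]}`. The recursion for the `B_n` says exactly that
`M(x) (B_0, …, B_N)ᵀ = B_{N+1} e_N`. Since `M(x)` is lower Hessenberg with superdiagonal `-1`,
the cofactors along its first row are the determinants of its trailing principal blocks:
`adj M(x)_{0,i} = B^{[i+1]}_{N+1}(x)`, in particular `adj M(x)_{0,N} = 1`. Cramer's rule in the
first coordinate then gives `det M(x) = B_{N+1}(x)`, so at a root `λ` the first row of `adj M(λ)`,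
which is the vector of the statement, lies in the left kernel of `M(λ)` because
`adj M · M = det M · 1`.
-/

open Matrix

namespace Matrix

variable {R : Type*} [CommRing R]

theorem det_eq_of_size_eq {s t : ℕ} (h : s = t) (A : Matrix (Fin s) (Fin s) R)
    (B : Matrix (Fin t) (Fin t) R) (hAB : ∀ a b, A a b = B (Fin.cast h a) (Fin.cast h b)) :
    A.det = B.det := by
  subst h
  congr
  ext a b
  exact hAB a b

def lowerRightBlock {n : ℕ} (M : Matrix (Fin n) (Fin n) R) (k : ℕ) :
    Matrix (Fin (n - k)) (Fin (n - k)) R :=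
  of fun a b => M ⟨k + a, by omega⟩ ⟨k + b, by omega⟩

theorem det_lowerRightBlock_self {n : ℕ} (M : Matrix (Fin n) (Fin n) R) :
    (M.lowerRightBlock n).det = 1 := by
  have : IsEmpty (Fin (n - n)) := by rw [Nat.sub_self]; infer_instance
  exact det_isEmpty

theorem det_lowerRightBlock_submatrix_succ {n : ℕ} (M : Matrix (Fin (n + 1)) (Fin (n + 1)) R)
    (k : ℕ) : ((M.submatrix Fin.succ Fin.succ).lowerRightBlock k).det =
      (M.lowerRightBlock (k + 1)).det :=
  det_eq_of_size_eq (by omega) _ _ fun a b => by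
    simp only [lowerRightBlock, submatrix_apply, of_apply, Fin.succ, Fin.val_cast]
    congr 2 <;> omega

theorem lowerRightBlock_scalar_sub {n : ℕ} (M : Matrix (Fin n) (Fin n) R) (c : R) (k : ℕ) :
    (scalar _ c - M).lowerRightBlock k = scalar _ c - M.lowerRightBlock k := by
  ext a b
  simp [lowerRightBlock, diagonal_apply, Fin.ext_iff]

/-- Lower Hessenberg, with every superdiagonal entry equal to `d`. -/
def IsLowerHessenberg {n : ℕ} (M : Matrix (Fin n) (Fin n) R) (d : R) : Prop :=
  (∀ i j : Fin n, (i : ℕ) + 1 < j → M i j = 0) ∧ ∀ i j : Fin n, (j : ℕ) = i + 1 → M i j = d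

namespace IsLowerHessenberg

variable {n : ℕ} {M : Matrix (Fin n) (Fin n) R} {d : R}

theorem scalar_sub (hM : M.IsLowerHessenberg 1) (c : R) :
    (scalar _ c - M).IsLowerHessenberg (-1) := by
  constructor
  · intro i j hij
    simp [hM.1 i j hij, diagonal_apply_ne _ (by omega : i ≠ j)]
  · intro i j hij
    simp [hM.2 i j hij, diagonal_apply_ne _ (by omega : i ≠ j)]

theorem map {S : Type*} [CommRing S] (hM : M.IsLowerHessenberg d) (f : R →+* S) :
    (M.map f).IsLowerHessenberg (f d) :=
  ⟨fun i j hij => by simp [hM.1 i j hij], fun i j hij => by simp [hM.2 i j hij]⟩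

theorem charmatrix (hM : M.IsLowerHessenberg 1) : M.charmatrix.IsLowerHessenberg (-1) :=
  (hM.map C).scalar_sub X

theorem submatrix_succ {M : Matrix (Fin (n + 1)) (Fin (n + 1)) R} (hM : M.IsLowerHessenberg d) :
    (M.submatrix Fin.succ Fin.succ).IsLowerHessenberg d :=
  ⟨fun i j hij => hM.1 _ _ (by simpa using hij), fun i j hij => hM.2 _ _ (by simpa using hij)⟩

/-- Deleting row `i` and column `0` leaves a block lower triangular matrix whose upper-left block
is triangular with diagonal `-1`. -/
theorem det_submatrix_succAbove_succ {M : Matrix (Fin (n + 1)) (Fin (n + 1)) R}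
    (hM : M.IsLowerHessenberg (-1)) (i : Fin (n + 1)) :
    (M.submatrix i.succAbove Fin.succ).det = (-1) ^ (i : ℕ) * (M.lowerRightBlock (i + 1)).det := by
  induction n with
  | zero =>
    obtain rfl := Fin.fin_one_eq_zero i
    simp [det_isEmpty]
  | succ n ih =>
    cases i using Fin.cases with
    | zero =>
      rw [Fin.succAbove_zero, Fin.val_zero, pow_zero, one_mul]
      exact det_eq_of_size_eq (by simp) _ _ fun a b => by
        simp [lowerRightBlock, Fin.succ, add_comm]
    | succ j =>
      rw [det_succ_row_zero, Fintype.sum_eq_single 0 fun c hc => ?_]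
      · have hS : (M.submatrix j.succ.succAbove Fin.succ).submatrix Fin.succ (Fin.succAbove 0) =
            (M.submatrix Fin.succ Fin.succ).submatrix j.succAbove Fin.succ := by
          ext a b
          simp [Fin.succ_succAbove_succ]
        have h01 : M 0 (Fin.succ 0) = -1 := hM.2 _ _ (by simp)
        simp only [submatrix_apply, Fin.succ_succAbove_zero, hS, ih hM.submatrix_succ,
          det_lowerRightBlock_submatrix_succ, h01, Fin.val_succ, Fin.val_zero, pow_succ, pow_zero]
        ring
      · have hc' : ((0 : Fin (n + 2)) : ℕ) + 1 < (c.succ : ℕ) := by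
          have : (c : ℕ) ≠ 0 := fun h => hc (Fin.ext h)
          simp only [Fin.val_zero, Fin.val_succ]
          omega
        rw [submatrix_apply, Fin.succ_succAbove_zero, hM.1 _ _ hc', mul_zero, zero_mul]

theorem adjugate_zero_apply {M : Matrix (Fin (n + 1)) (Fin (n + 1)) R}
    (hM : M.IsLowerHessenberg (-1)) (i : Fin (n + 1)) :
    adjugate M 0 i = (M.lowerRightBlock (i + 1)).det := by
  rw [adjugate_fin_succ_eq_det_submatrix, Fin.succAbove_zero, hM.det_submatrix_succAbove_succ,
    Fin.val_zero, add_zero, ← mul_assoc, ← pow_add, Even.neg_one_pow ⟨_, rfl⟩, one_mul]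

theorem adjugate_zero_last {M : Matrix (Fin (n + 1)) (Fin (n + 1)) R}
    (hM : M.IsLowerHessenberg (-1)) : adjugate M 0 (Fin.last n) = 1 := by
  rw [hM.adjugate_zero_apply, Fin.val_last, det_lowerRightBlock_self]

theorem det_mul_apply_zero_of_mulVec_eq_single {M : Matrix (Fin (n + 1)) (Fin (n + 1)) R}
    (hM : M.IsLowerHessenberg (-1)) {v : Fin (n + 1) → R} {r : R}
    (hv : M *ᵥ v = Pi.single (Fin.last n) r) : M.det * v 0 = r := by
  calc M.det * v 0 = ((M.det • (1 : Matrix (Fin (n + 1)) (Fin (n + 1)) R)) *ᵥ v) 0 := by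
        rw [smul_mulVec, one_mulVec, Pi.smul_apply, smul_eq_mul]
    _ = (adjugate M *ᵥ (M *ᵥ v)) 0 := by rw [mulVec_mulVec, adjugate_mul]
    _ = r := by simp [hv, mulVec_single, hM.adjugate_zero_last]

end IsLowerHessenberg

theorem vecMul_adjugate_eq_smul_of_eval_charpoly_eq_zero {n : Type*} [Fintype n] [DecidableEq n]
    (A : Matrix n n R) {c : R} (hc : A.charpoly.eval c = 0) (j : n) :
    adjugate (scalar n c - A) j ᵥ* A = c • adjugate (scalar n c - A) j := by
  have hker : adjugate (scalar n c - A) j ᵥ* (scalar n c - A) = 0 := by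
    change (adjugate (scalar n c - A) * (scalar n c - A)) j = 0
    rw [adjugate_mul, ← eval_charpoly, hc, zero_smul]
    rfl
  rw [vecMul_sub, sub_eq_zero] at hker
  rw [← hker]
  simp

end Matrix

theorem Finset.sum_range_eq_sum_Icc_of_band {M : Type*} [AddCommMonoid M] (f : ℕ → M) (n p : ℕ)
    (hf : ∀ m, m + p < n → f m = 0) :
    ∑ m ∈ Finset.range n, f m = ∑ j ∈ Finset.Icc 1 p, if j ≤ n then f (n - j) else 0 := by
  set g : ℕ → M := fun k => if k + 1 ≤ n then f (n - (k + 1)) else 0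
  have hg_high : ∑ k ∈ Finset.range p, g (n + k) = 0 :=
    Finset.sum_eq_zero fun k _ => if_neg (by omega)
  have hg_far : ∑ k ∈ Finset.range n, g (p + k) = 0 :=
    Finset.sum_eq_zero fun k _ => by
      simp only [g]
      split_ifs
      · exact hf _ (by omega)
      · rfl
  calc ∑ m ∈ Finset.range n, f m = ∑ k ∈ Finset.range n, g k := by
        rw [← Finset.sum_range_reflect]
        refine Finset.sum_congr rfl fun k hk => ?_
        rw [Finset.mem_range] at hk
        simp only [g, Nat.sub_sub, add_comm 1, if_pos (show k + 1 ≤ n by omega)]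
    _ = ∑ k ∈ Finset.range (p + n), g k := by
        rw [add_comm, Finset.sum_range_add, hg_high, add_zero]
    _ = ∑ k ∈ Finset.range p, g k := by
        rw [Finset.sum_range_add, hg_far, add_zero]
    _ = ∑ j ∈ Finset.Icc 1 p, if j ≤ n then f (n - j) else 0 := by
        rw [← Finset.Ico_add_one_right_eq_Icc, Finset.sum_Ico_eq_sum_range, Nat.add_sub_cancel]
        simp only [g, add_comm 1]

section Recursion

variable {p : ℕ} {T : ℕ → ℕ → ℝ}

theorem truncM_isLowerHessenberg (hT1 : ∀ n, T n (n + 1) = 1)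
    (hTsup : ∀ n m, n + 1 < m → T n m = 0) (N : ℕ) : (truncM T N).IsLowerHessenberg 1 :=
  ⟨fun i j hij => hTsup i j hij, fun i j hij => by simp [truncM, hij, hT1]⟩

theorem Btr_eq_charpoly_lowerRightBlock {N k : ℕ} (hk : k ≤ N + 1) :
    Btr T N k = ((truncM T N).lowerRightBlock k).charpoly := by
  rw [Btr, if_pos hk]
  rfl

theorem charmatrix_truncM_mulVec (hT1 : ∀ n, T n (n + 1) = 1)
    (hTsup : ∀ n m, n + 1 < m → T n m = 0) (hTsub : ∀ n m, m + p < n → T n m = 0)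
    {B : ℕ → ℝ[X]}
    (hBrec : ∀ n, B (n + 1) = (X - C (T n n)) * B n
      - ∑ j ∈ Finset.Icc 1 p, (if j ≤ n then C (T n (n - j)) * B (n - j) else 0)) (N : ℕ) :
    (truncM T N).charmatrix *ᵥ (fun i => B i) = Pi.single (Fin.last N) (B (N + 1)) := by
  funext i
  set n : ℕ := (i : ℕ) with hn
  set f : ℕ → ℝ[X] := fun m => C (T n m) * B m
  have hrow : ((truncM T N).charmatrix *ᵥ (fun i => B i)) i =
      X * B n - ∑ m ∈ Finset.range (N + 1), f m := by
    rw [← Fin.sum_univ_eq_sum_range f]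
    simp [charmatrix, mulVec, dotProduct, truncM, f, hn, sub_mul, diagonal_apply]
  have hsplit : ∑ m ∈ Finset.range (N + 1), f m =
      ∑ m ∈ Finset.range n, f m + f n + if n < N then B (n + 1) else 0 := by
    rcases Nat.lt_or_ge n N with hnN | hnN
    · obtain ⟨k, hk⟩ : ∃ k, N + 1 = n + 2 + k := ⟨N - n - 1, by omega⟩
      have hfar : ∑ m ∈ Finset.range k, f (n + 2 + m) = 0 :=
        Finset.sum_eq_zero fun m _ => by simp [f, hTsup n (n + 2 + m) (by omega)]
      rw [hk, Finset.sum_range_add, hfar, add_zero, Finset.sum_range_succ, Finset.sum_range_succ,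
        if_pos hnN]
      simp [f, hT1]
    · rw [show N = n by omega, Finset.sum_range_succ, if_neg (lt_irrefl n), add_zero]
  have hband := Finset.sum_range_eq_sum_Icc_of_band f n p fun m hm => by
    simp [f, hTsub n m hm]
  rw [hrow, hsplit, hband, Pi.single_apply]
  by_cases hnN : n < N
  · rw [if_pos hnN, if_neg fun hi => by simp [hn, hi] at hnN]
    linear_combination -(hBrec n)
  · have hNn : N = n := by omega
    rw [if_neg hnN, if_pos (Fin.ext (by rw [Fin.val_last, ← hn, hNn])), hNn]
    linear_combination -(hBrec n)

end Recursion

theorem stmt_14_general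
    (p : ℕ)
    (T : ℕ → ℕ → ℝ)
    (hT1 : ∀ n, T n (n + 1) = 1)
    (hTsup : ∀ n m, n + 1 < m → T n m = 0)
    (hTsub : ∀ n m, m + p < n → T n m = 0)
    (B : ℕ → Polynomial ℝ)
    (hB0 : B 0 = 1)
    (hBrec : ∀ n, B (n + 1) = (X - C (T n n)) * B n
      - ∑ j ∈ Finset.Icc 1 p, (if j ≤ n then C (T n (n - j)) * B (n - j) else 0)) :
    ∀ (N : ℕ) (lam : ℝ), eval lam (B (N + 1)) = 0 →
      (Matrix.vecMul (fun n : Fin (N + 1) => eval lam (Btr T N ((n : ℕ) + 1))) (truncM T N)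
        = lam • (fun n : Fin (N + 1) => eval lam (Btr T N ((n : ℕ) + 1)))) ∧
      eval lam (Btr T N (N + 1)) = 1 := by
  intro N lam hroot
  have hA := truncM_isLowerHessenberg hT1 hTsup N
  have hcharpoly : (truncM T N).charpoly = B (N + 1) := by
    simpa [charpoly, hB0] using hA.charmatrix.det_mul_apply_zero_of_mulVec_eq_single
      (charmatrix_truncM_mulVec hT1 hTsup hTsub hBrec N)
  have hw : (fun n : Fin (N + 1) => eval lam (Btr T N ((n : ℕ) + 1))) =
      adjugate (scalar _ lam - truncM T N) 0 := by
    funext i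
    rw [(hA.scalar_sub lam).adjugate_zero_apply, lowerRightBlock_scalar_sub, ← eval_charpoly,
      Btr_eq_charpoly_lowerRightBlock (by omega)]
  refine ⟨?_, ?_⟩
  · rw [hw]
    exact (truncM T N).vecMul_adjugate_eq_smul_of_eval_charpoly_eq_zero (hcharpoly ▸ hroot) 0
  · rw [Btr_eq_charpoly_lowerRightBlock le_rfl, eval_charpoly, ← lowerRightBlock_scalar_sub,
      det_lowerRightBlock_self]

theorem stmt_14
    (p : ℕ) (hp : 1 ≤ p)
    (T : ℕ → ℕ → ℝ)
    (hT1 : ∀ n, T n (n + 1) = 1)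
    (hTsup : ∀ n m, n + 1 < m → T n m = 0)
    (hTsub : ∀ n m, m + p < n → T n m = 0)
    (hTlow : ∀ n, p ≤ n → T n (n - p) ≠ 0)
    (B : ℕ → Polynomial ℝ)
    (hB0 : B 0 = 1)
    (hBrec : ∀ n, B (n + 1) = (X - C (T n n)) * B n
      - ∑ j ∈ Finset.Icc 1 p, (if j ≤ n then C (T n (n - j)) * B (n - j) else 0)) :
    ∀ (N : ℕ) (lam : ℝ), eval lam (B (N + 1)) = 0 →
      (Matrix.vecMul (fun n : Fin (N + 1) => eval lam (Btr T N ((n : ℕ) + 1))) (truncM T N)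
        = lam • (fun n : Fin (N + 1) => eval lam (Btr T N ((n : ℕ) + 1)))) ∧
      eval lam (Btr T N (N + 1)) = 1 :=
  stmt_14_general p T hT1 hTsup hTsub B hB0 hBrec
end

section
/- (Christoffel–Darboux formulas for truncated polynomials) For every N ≥ 0: (i) the two-variable polynomial identity (x − y)·Σ_{n=0}^{N} B^{[n+1]}_{N+1}(x)·B_n(y) = B_{N+1}(x) − B_{N+1}(y) holds; (ii) the confluent identity Σ_{n=0}^{N} B^{[n+1]}_{N+1}·B_n = B'_{N+1} holds, where ' denotes the derivative of a polynomial. -/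
/-!
Expanding `det (x - T^{[N,n]})` along its first column gives the truncated polynomials a
backward recurrence `B^{[n]} = (x - T_{n,n}) B^{[n+1]} - ∑_j T_{n+j,n} B^{[n+j+1]}`, the
transpose of the forward recurrence of the `B_n`. Pairing the two recurrences, the sum
`∑_n (B^{[n]}(x) B_n(y) - B^{[n+1]}(x) B_{n+1}(y))` telescopes to `B^{[0]}(x) - B_{N+1}(y)`,
while termwise it is `(x - y) ∑_n B^{[n+1]}(x) B_n(y)` because the off-diagonal couplings cancel.
Setting `x = y` shows `B^{[0]}_{N+1} = B_{N+1}`; differentiating in `x` at `x = y` gives the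
confluent form.
-/

open Polynomial

open Finset

theorem Finset.sum_range_add_right_eq_sum_ite {R : Type*} [AddCommMonoid R] (g : ℕ → R)
    (j N : ℕ) (hg : ∀ n, N < n → g n = 0) :
    ∑ m ∈ range (N + 1), g (m + j) = ∑ n ∈ range (N + 1), if j ≤ n then g n else 0 := by
  set f : ℕ → R := fun n => if j ≤ n then g n else 0
  have hpad : ∑ n ∈ range (N + 1 + j), f n = ∑ n ∈ range (N + 1), f n := by
    rw [sum_range_add f, sum_eq_zero (s := range j) fun i _ => by
      simp [f, hg (N + 1 + i) (by omega)], add_zero]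
  rw [← hpad, Nat.add_comm (N + 1) j, sum_range_add f,
    sum_eq_zero (s := range j) fun i hi => if_neg (by simpa using hi), zero_add]
  simp [f, add_comm]

theorem christoffel_darboux_of_recurrences {R : Type*} [CommRing R] (a : ℕ → ℕ → R)
    (p N : ℕ) (x y : R) (P Q : ℕ → R)
    (hP : ∀ n ≤ N, P (n + 1) = (y - a n n) * P n
      - ∑ j ∈ Icc 1 p, if j ≤ n then a n (n - j) * P (n - j) else 0)
    (hQ : ∀ n ≤ N, Q n = (x - a n n) * Q (n + 1) - ∑ j ∈ Icc 1 p, a (n + j) n * Q (n + j + 1))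
    (hQ_zero : ∀ k, N + 1 < k → Q k = 0) :
    (x - y) * ∑ n ∈ range (N + 1), Q (n + 1) * P n = Q 0 * P 0 - Q (N + 1) * P (N + 1) := by
  set u : ℕ → R := fun n => (∑ j ∈ Icc 1 p, a (n + j) n * Q (n + j + 1)) * P n
  set v : ℕ → R := fun n =>
    (∑ j ∈ Icc 1 p, if j ≤ n then a n (n - j) * P (n - j) else 0) * Q (n + 1)
  -- both sides collect the couplings `a (m + j) m` between `P m` and `Q (m + j + 1)`
  have hcross : ∑ n ∈ range (N + 1), u n = ∑ n ∈ range (N + 1), v n := by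
    simp only [u, v, sum_mul]
    rw [sum_comm, sum_comm (s := range (N + 1))]
    refine sum_congr rfl fun j _ => ?_
    have hvanish : ∀ n, N < n → a n (n - j) * P (n - j) * Q (n + 1) = 0 := fun n hn => by
      rw [hQ_zero (n + 1) (by omega), mul_zero]
    convert sum_range_add_right_eq_sum_ite _ j N hvanish using 2 with n _ n _
    · simp only [Nat.add_sub_cancel]; ring
    · split_ifs <;> ring
  calc (x - y) * ∑ n ∈ range (N + 1), Q (n + 1) * P n
      = ∑ n ∈ range (N + 1), ((x - y) * (Q (n + 1) * P n) - u n + v n) := by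
        rw [sum_add_distrib, sum_sub_distrib, hcross, mul_sum, sub_add_cancel]
    _ = ∑ n ∈ range (N + 1), (Q n * P n - Q (n + 1) * P (n + 1)) :=
        sum_congr rfl fun n hn => by
          have hn' := Nat.le_of_lt_succ (mem_range.mp hn)
          rw [hQ n hn', hP n hn']; ring
    _ = Q 0 * P 0 - Q (N + 1) * P (N + 1) := sum_range_sub' (fun n => Q n * P n) (N + 1)

theorem Matrix.det_submatrix_succ_succAbove_succ {R : Type*} [CommRing R] {m : ℕ}
    (A : Matrix (Fin (m + 2)) (Fin (m + 2)) R) (hA : ∀ c : Fin (m + 1), c ≠ 0 → A 0 c.succ = 0)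
    (i : Fin (m + 1)) :
    (A.submatrix i.succ.succAbove Fin.succ).det
      = A 0 1 * ((A.submatrix Fin.succ Fin.succ).submatrix i.succAbove Fin.succ).det := by
  rw [det_succ_row_zero, Finset.sum_eq_single 0]
  · simp [Matrix.submatrix_submatrix, Function.comp_def]
  · intro c _ hc
    simp [hA c hc]
  · simp

/-- `truncMatrix T k (N + 1 - k)` is the paper's `T^{[N,k]}`. -/
def truncMatrix (T : ℕ → ℕ → ℝ) (k m : ℕ) : Matrix (Fin m) (Fin m) ℝ :=
  Matrix.of fun i j => T (k + i) (k + j)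

section Btr

variable (T : ℕ → ℕ → ℝ)

theorem Btr_eq_charpoly {N k m : ℕ} (h : k + m = N + 1) :
    Btr T N k = (truncMatrix T k m).charpoly := by
  rw [Btr, if_pos (by omega), show N + 1 - k = m by omega]
  rfl

theorem Btr_succ_self (N : ℕ) : Btr T N (N + 1) = 1 := by
  rw [Btr_eq_charpoly T (m := 0) rfl, Matrix.charpoly, Matrix.det_isEmpty]

theorem Btr_of_succ_lt {N k : ℕ} (h : N + 1 < k) : Btr T N k = 0 :=
  if_neg (by omega)

theorem charmatrix_truncMatrix_apply (k m : ℕ) (i j : Fin m) :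
    (truncMatrix T k m).charmatrix i j = (if i = j then X else 0) - C (T (k + i) (k + j)) := by
  by_cases h : i = j <;> simp [truncMatrix, h]

theorem charmatrix_truncMatrix_submatrix_succ (k m : ℕ) :
    (truncMatrix T k (m + 1)).charmatrix.submatrix Fin.succ Fin.succ
      = (truncMatrix T (k + 1) m).charmatrix := by
  ext i j
  simp only [Matrix.submatrix_apply, charmatrix_truncMatrix_apply, Fin.succ_inj, Fin.val_succ]
  ring_nf

/-- Deleting row `i` and column `0` leaves `i` superdiagonal entries `-T_{r,r+1} = -1` on top of
the block `x - T^{[k+m, k+i+1]}`. -/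
theorem det_charmatrix_truncMatrix_submatrix_succAbove (hT1 : ∀ n, T n (n + 1) = 1)
    (hTsup : ∀ n m, n + 1 < m → T n m = 0) (k m : ℕ) (i : Fin (m + 1)) :
    ((truncMatrix T k (m + 1)).charmatrix.submatrix i.succAbove Fin.succ).det
      = (-1) ^ (i : ℕ) * Btr T (k + m) (k + i + 1) := by
  induction m generalizing k with
  | zero =>
    rw [Fin.fin_one_eq_zero i]
    simp [Btr_succ_self]
  | succ m ih =>
    induction i using Fin.cases with
    | zero =>
      rw [Fin.succAbove_zero, charmatrix_truncMatrix_submatrix_succ, ← Matrix.charpoly,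
        Fin.val_zero, pow_zero, one_mul, add_zero, Btr_eq_charpoly T (m := m + 1) (by omega)]
    | succ i =>
      rw [Matrix.det_submatrix_succ_succAbove_succ, charmatrix_truncMatrix_submatrix_succ, ih]
      · have h01 : (truncMatrix T k (m + 2)).charmatrix 0 1 = -1 := by
          simp [truncMatrix, hT1]
        rw [h01, Fin.val_succ, pow_succ, show k + 1 + m = k + (m + 1) by omega,
          show k + 1 + i + 1 = k + (i + 1) + 1 by omega]
        ring
      · intro c hc
        have hc' : (c : ℕ) ≠ 0 := fun h => hc (Fin.ext h)
        rw [charmatrix_truncMatrix_apply, if_neg (Fin.succ_ne_zero c).symm, Fin.val_zero,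
          Fin.val_succ, add_zero, hTsup k _ (by omega), map_zero, sub_zero]

theorem Btr_eq_X_mul_sub_sum_range (hT1 : ∀ n, T n (n + 1) = 1)
    (hTsup : ∀ n m, n + 1 < m → T n m = 0) (n m : ℕ) :
    Btr T (n + m) n = X * Btr T (n + m) (n + 1)
      - ∑ i ∈ range (m + 1), C (T (n + i) n) * Btr T (n + m) (n + i + 1) := by
  rw [Btr_eq_charpoly T (m := m + 1) (by omega), Matrix.charpoly, Matrix.det_succ_column_zero,
    ← Fin.sum_univ_eq_sum_range (fun i => C (T (n + i) n) * Btr T (n + m) (n + i + 1))]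
  simp only [det_charmatrix_truncMatrix_submatrix_succAbove T hT1 hTsup,
    charmatrix_truncMatrix_apply, Fin.val_zero, add_zero]
  have hsign (i : ℕ) : ((-1 : ℝ[X]) ^ i) * (-1) ^ i = 1 := by simp [← mul_pow]
  have hterm (i : Fin (m + 1)) : (-1) ^ (i : ℕ) * ((if i = 0 then X else 0)
      - C (T (n + i) n)) * ((-1) ^ (i : ℕ) * Btr T (n + m) (n + i + 1))
      = (if i = 0 then X * Btr T (n + m) (n + 1) else 0)
        - C (T (n + i) n) * Btr T (n + m) (n + i + 1) := by
    rw [mul_mul_mul_comm, hsign, one_mul]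
    split_ifs with hi
    · simp [hi, sub_mul]
    · simp
  simp only [hterm, sum_sub_distrib, Fintype.sum_ite_eq']

theorem Btr_eq_sub_sum (p : ℕ) (hT1 : ∀ n, T n (n + 1) = 1)
    (hTsup : ∀ n m, n + 1 < m → T n m = 0) (hTsub : ∀ n m, m + p < n → T n m = 0)
    {N n : ℕ} (hn : n ≤ N) :
    Btr T N n = (X - C (T n n)) * Btr T N (n + 1)
      - ∑ j ∈ Icc 1 p, C (T (n + j) n) * Btr T N (n + j + 1) := by
  obtain ⟨m, rfl⟩ := Nat.exists_eq_add_of_le hn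
  set g : ℕ → ℝ[X] := fun j => C (T (n + j) n) * Btr T (n + m) (n + j + 1)
  have hvanish : ∀ j, min m p < j → g j = 0 := by
    intro j hj
    rcases min_lt_iff.mp hj with hjm | hjp
    · simp [g, Btr_of_succ_lt T (show n + m + 1 < n + j + 1 by omega)]
    · simp [g, hTsub (n + j) n (by omega)]
  have hrange : ∑ i ∈ range (m + 1), g i = ∑ i ∈ range (p + 1), g i := by
    rw [← sum_subset (range_subset_range.mpr (Nat.succ_le_succ (min_le_left m p))),
      ← sum_subset (range_subset_range.mpr (Nat.succ_le_succ (min_le_right m p)))] <;>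
    · intro j hj hj'
      exact hvanish j (by simp only [mem_range] at hj hj'; omega)
  rw [Btr_eq_X_mul_sub_sum_range T hT1 hTsup, hrange, sum_range_succ', ← Ico_add_one_right_eq_Icc,
    sum_Ico_eq_sum_range]
  simp only [g, add_zero, Nat.add_sub_cancel, add_comm 1]
  ring

end Btr

theorem stmt_15_general
    (p : ℕ)
    (T : ℕ → ℕ → ℝ)
    (hT1 : ∀ n, T n (n + 1) = 1)
    (hTsup : ∀ n m, n + 1 < m → T n m = 0)
    (hTsub : ∀ n m, m + p < n → T n m = 0)
    (B : ℕ → Polynomial ℝ)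
    (hB0 : B 0 = 1)
    (hBrec : ∀ n, B (n + 1) = (X - C (T n n)) * B n
      - ∑ j ∈ Finset.Icc 1 p, (if j ≤ n then C (T n (n - j)) * B (n - j) else 0)) :
    ∀ N : ℕ,
      (∀ x y : ℝ,
        (x - y) * ∑ n ∈ Finset.range (N + 1), eval x (Btr T N (n + 1)) * eval y (B n)
          = eval x (B (N + 1)) - eval y (B (N + 1))) ∧
      (∑ n ∈ Finset.range (N + 1), Btr T N (n + 1) * B n = derivative (B (N + 1))) := by
  intro N
  have key (y : ℝ) : (X - C y) * ∑ n ∈ range (N + 1), Btr T N (n + 1) * C (eval y (B n))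
      = Btr T N 0 - C (eval y (B (N + 1))) := by
    have := christoffel_darboux_of_recurrences (fun i j => C (T i j)) p N X (C y)
      (fun n => C (eval y (B n))) (Btr T N) (fun n _ => ?_)
      (fun n hn => Btr_eq_sub_sum T p hT1 hTsup hTsub hn) (fun k hk => Btr_of_succ_lt T hk)
    · simpa [hB0, Btr_succ_self] using this
    · simp only [hBrec n, eval_sub, eval_mul, eval_X, eval_C, eval_finsetSum, map_sub, map_mul,
        map_sum]
      congr 1
      refine sum_congr rfl fun j _ => ?_
      split_ifs <;> simp
  -- at `X = y` the left side of `key` vanishes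
  have hB : Btr T N 0 = B (N + 1) := Polynomial.funext fun y => by
    simpa [sub_eq_zero] using (congrArg (eval y) (key y)).symm
  refine ⟨fun x y => by simpa [hB, eval_finsetSum] using congrArg (eval x) (key y), ?_⟩
  refine Polynomial.funext fun y => ?_
  simpa [derivative_mul, hB, eval_finsetSum] using
    congrArg (fun q => eval y (derivative q)) (key y)

theorem stmt_15
    (p : ℕ) (hp : 1 ≤ p)
    (T : ℕ → ℕ → ℝ)
    (hT1 : ∀ n, T n (n + 1) = 1)
    (hTsup : ∀ n m, n + 1 < m → T n m = 0)
    (hTsub : ∀ n m, m + p < n → T n m = 0)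
    (hTlow : ∀ n, p ≤ n → T n (n - p) ≠ 0)
    (B : ℕ → Polynomial ℝ)
    (hB0 : B 0 = 1)
    (hBrec : ∀ n, B (n + 1) = (X - C (T n n)) * B n
      - ∑ j ∈ Finset.Icc 1 p, (if j ≤ n then C (T n (n - j)) * B (n - j) else 0)) :
    ∀ N : ℕ,
      (∀ x y : ℝ,
        (x - y) * ∑ n ∈ Finset.range (N + 1), eval x (Btr T N (n + 1)) * eval y (B n)
          = eval x (B (N + 1)) - eval y (B (N + 1))) ∧
      (∑ n ∈ Finset.range (N + 1), Btr T N (n + 1) * B n = derivative (B (N + 1))) :=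
  stmt_15_general p T hT1 hTsup hTsub B hB0 hBrec
end

section
/- (Discrete moments) Assume B_{N+1} has N+1 simple real zeros λ_1 > ⋯ > λ_{N+1}. Then for every n ≥ 0 and every a ∈ {1,…,p}: Σ_{k=1}^{N+1} μ_{k,a}·(λ_k)^n = e_1ᵀ·(T^{[N]})^n·e^ν_a. -/
open Polynomial

noncomputable def Qp (p : ℕ) (A : Fin p → ℕ → Polynomial ℝ) (n N : ℕ) : Polynomial ℝ :=
  Matrix.det (Matrix.of fun i a : Fin p =>
    if (i : ℕ) = 0 then A a n else A a (N + (i : ℕ)))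

noncomputable def nuMat (p : ℕ) (A : Fin p → ℕ → Polynomial ℝ) : Matrix (Fin p) (Fin p) ℝ :=
  Matrix.of fun j a : Fin p => (A a (j : ℕ)).coeff 0

noncomputable def wfun (p : ℕ) (A : Fin p → ℕ → Polynomial ℝ) (B : ℕ → Polynomial ℝ)
    (N : ℕ) (lam : Fin (N + 1) → ℝ) (k : Fin (N + 1)) (n : ℕ) : ℝ :=
  Polynomial.eval (lam k) (Qp p A n N) /
    ∑ l ∈ Finset.range (N + 1),
      Polynomial.eval (lam k) (Qp p A l N) * Polynomial.eval (lam k) (B l)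

noncomputable def mu (p : ℕ) (A : Fin p → ℕ → Polynomial ℝ) (B : ℕ → Polynomial ℝ)
    (N : ℕ) (lam : Fin (N + 1) → ℝ) (k : Fin (N + 1)) (a : Fin p) : ℝ :=
  ∑ b : Fin p, (nuMat p A)⁻¹ a b * wfun p A B N lam k (b : ℕ)

noncomputable def enu (p : ℕ) (A : Fin p → ℕ → Polynomial ℝ) (N : ℕ) (a : Fin p) :
    Fin (N + 1) → ℝ :=
  fun j => if hj : (j : ℕ) < p then (nuMat p A)⁻¹ a ⟨(j : ℕ), hj⟩ else 0

open Matrix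

/-!
At a zero `λ` of `B_{N+1}`, the vector `(B_0(λ), …, B_N(λ))` is a right eigenvector of `T^{[N]}`.
By multilinearity of the determinant, `Q_{·,N}` satisfies the type I recurrence, and since
`Q_{l,N} = 0` for `N < l < N + p` (two equal rows) the vector `(Q_{0,N}(y), …, Q_{N,N}(y))` is a
left eigenvector up to the defect `T_{N+p,N} Q_{N+p,N}(y)` in the last column. Pairing the two
gives the Christoffel–Darboux identity
`(x - y) ∑ Q_{l,N}(y) B_l(x) = Q_{N,N}(y) B_{N+1}(x) - T_{N+p,N} Q_{N+p,N}(y) B_N(x)`.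
Its confluent form and its derivative at `x = y = λ_k` force `Q_{N+p,N}(λ_k) = 0` (the
denominators are nonzero), after which it says that `W = (w_{k,j})` is the inverse of
`V = (B_l(λ_k))`. Hence `T^{[N]} = V diag(λ) W`, and since the first row of `V` is all ones,
`e_1ᵀ (T^{[N]})ⁿ e^ν_a = ∑_k λ_kⁿ (W e^ν_a)_k = ∑_k λ_kⁿ μ_{k,a}`.
-/

theorem pow_eq_mul_diagonal_pow_mul {ι K : Type*} [Fintype ι] [DecidableEq ι] [CommRing K]
    {M V U : Matrix ι ι K} {d : ι → K} (hMV : M * V = V * diagonal d) (hUV : U * V = 1)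
    (n : ℕ) : M ^ n = V * diagonal (d ^ n) * U := by
  have hconj : SemiconjBy V (diagonal d) M := hMV.symm
  calc M ^ n = M ^ n * V * U := by rw [Matrix.mul_assoc, mul_eq_one_comm.mp hUV, Matrix.mul_one]
    _ = V * diagonal (d ^ n) * U := by rw [← (hconj.pow_right n).eq, diagonal_pow]

theorem pow_mulVec_apply_eq_sum {ι K : Type*} [Fintype ι] [DecidableEq ι] [CommRing K]
    {M V U : Matrix ι ι K} {d : ι → K} (hMV : M * V = V * diagonal d) (hUV : U * V = 1)
    {i : ι} (hVi : ∀ k, V i k = 1) (n : ℕ) (e : ι → K) :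
    (M ^ n *ᵥ e) i = ∑ k, (U *ᵥ e) k * d k ^ n := by
  rw [pow_eq_mul_diagonal_pow_mul hMV hUV, Matrix.mul_assoc, ← mulVec_mulVec, ← mulVec_mulVec,
    mulVec, dotProduct]
  simp only [hVi, mul_one, mulVec_diagonal, Pi.pow_apply, mul_comm]

theorem sum_fin_mul_eq_sum_fin_mul {N p : ℕ} (f g : ℕ → ℝ)
    (hf : ∀ j, N < j → j < p → f j = 0) (hg : ∀ j, p ≤ j → g j = 0) :
    ∑ j : Fin (N + 1), f j * g j = ∑ j : Fin p, f j * g j := by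
  have hextend : ∀ K, K ≤ N + 1 + p → (∀ j, K ≤ j → j < N + 1 + p → f j * g j = 0) →
      ∑ j : Fin K, f j * g j = ∑ j ∈ Finset.range (N + 1 + p), f j * g j := fun K hK h => by
    rw [Fin.sum_univ_eq_sum_range (fun j => f j * g j)]
    exact Finset.sum_subset (Finset.range_subset_range.2 hK) fun j hj hjK =>
      h j (by simpa using hjK) (by simpa using hj)
  rw [hextend (N + 1) (by omega), hextend p (by omega)]
  · exact fun j hj _ => by rw [hg j hj, mul_zero]
  · intro j hj _
    by_cases hjp : j < p
    · rw [hf j (by omega) hjp, zero_mul]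
    · rw [hg j (by omega), mul_zero]

theorem sub_mul_sum_mul_eq_of_eigen {N : ℕ} {M : ℕ → ℕ → ℝ} {u v : ℕ → ℝ} {x y β γ : ℝ}
    (hu : ∀ l ≤ N, ∑ m ∈ Finset.range (N + 1), M l m * u m = x * u l - if l = N then β else 0)
    (hv : ∀ m ≤ N, ∑ l ∈ Finset.range (N + 1), v l * M l m = y * v m - if m = N then γ else 0) :
    (x - y) * ∑ l ∈ Finset.range (N + 1), v l * u l = v N * β - γ * u N := by
  have hleft : ∑ l ∈ Finset.range (N + 1), v l * ∑ m ∈ Finset.range (N + 1), M l m * u m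
      = x * ∑ l ∈ Finset.range (N + 1), v l * u l - v N * β := by
    rw [Finset.sum_congr rfl fun l hl => by rw [hu l (by simp at hl; omega)]]
    simp [mul_sub, Finset.mul_sum, Finset.sum_sub_distrib, mul_left_comm]
  have hright : ∑ m ∈ Finset.range (N + 1), (∑ l ∈ Finset.range (N + 1), v l * M l m) * u m
      = y * ∑ l ∈ Finset.range (N + 1), v l * u l - γ * u N := by
    rw [Finset.sum_congr rfl fun m hm => by rw [hv m (by simp at hm; omega)]]
    simp [sub_mul, Finset.mul_sum, Finset.sum_sub_distrib, mul_assoc]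
  have hswap : ∑ l ∈ Finset.range (N + 1), v l * ∑ m ∈ Finset.range (N + 1), M l m * u m
      = ∑ m ∈ Finset.range (N + 1), (∑ l ∈ Finset.range (N + 1), v l * M l m) * u m := by
    simp only [Finset.mul_sum, Finset.sum_mul, mul_assoc]
    exact Finset.sum_comm
  linear_combination hswap - hleft + hright

theorem sum_Icc_ite_sub_eq_sum_range {M : Type*} [AddCommMonoid M] {p l : ℕ} {F : ℕ → M}
    (hF : ∀ m, m + p < l → F m = 0) :
    ∑ j ∈ Finset.Icc 1 p, (if j ≤ l then F (l - j) else 0) = ∑ m ∈ Finset.range l, F m := by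
  refine Finset.sum_bij_ne_zero (fun j _ _ => l - j) ?_ ?_ ?_ ?_
  · intro j hj hne
    have : j ≤ l := by by_contra h; exact hne (if_neg h)
    simp only [Finset.mem_Icc] at hj
    simp only [Finset.mem_range]; omega
  · intro j₁ hj₁ hne₁ j₂ hj₂ hne₂ h
    have : j₁ ≤ l := by by_contra h; exact hne₁ (if_neg h)
    have : j₂ ≤ l := by by_contra h; exact hne₂ (if_neg h)
    omega
  · intro m hm hne
    simp only [Finset.mem_range] at hm
    have : l ≤ m + p := by by_contra h; exact hne (hF m (by omega))
    refine ⟨l - m, by simp only [Finset.mem_Icc]; omega, ?_, by omega⟩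
    rwa [if_pos (by omega), Nat.sub_sub_self hm.le]
  · intro j _ hne
    have : j ≤ l := by by_contra h; exact hne (if_neg h)
    rw [if_pos this]

section Recurrences

variable {p : ℕ} {T : ℕ → ℕ → ℝ}

theorem X_mul_eq_sum_range_add_two {B : ℕ → ℝ[X]} (hT1 : ∀ n, T n (n + 1) = 1)
    (hTsub : ∀ n m, m + p < n → T n m = 0)
    (hBrec : ∀ n, B (n + 1) = (X - C (T n n)) * B n
      - ∑ j ∈ Finset.Icc 1 p, (if j ≤ n then C (T n (n - j)) * B (n - j) else 0)) (l : ℕ) :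
    X * B l = ∑ m ∈ Finset.range (l + 2), C (T l m) * B m := by
  rw [Finset.sum_range_succ, Finset.sum_range_succ, hT1, map_one, one_mul, hBrec,
    sum_Icc_ite_sub_eq_sum_range (F := fun m => C (T l m) * B m)
      fun m hm => by rw [hTsub l m hm, map_zero, zero_mul]]
  ring

theorem sum_mul_eval_eq_of_le {B : ℕ → ℝ[X]} (hT1 : ∀ n, T n (n + 1) = 1)
    (hTsup : ∀ n m, n + 1 < m → T n m = 0) (hTsub : ∀ n m, m + p < n → T n m = 0)
    (hBrec : ∀ n, B (n + 1) = (X - C (T n n)) * B n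
      - ∑ j ∈ Finset.Icc 1 p, (if j ≤ n then C (T n (n - j)) * B (n - j) else 0))
    {N l : ℕ} (hl : l ≤ N) (x : ℝ) :
    ∑ m ∈ Finset.range (N + 1), T l m * eval x (B m)
      = x * eval x (B l) - if l = N then eval x (B (N + 1)) else 0 := by
  have hrow := congrArg (eval x) (X_mul_eq_sum_range_add_two hT1 hTsub hBrec l)
  simp only [eval_mul, eval_X, eval_finsetSum, eval_C] at hrow
  have hextend : ∑ m ∈ Finset.range (l + 2), T l m * eval x (B m)
      = ∑ m ∈ Finset.range (N + 2), T l m * eval x (B m) :=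
    Finset.sum_subset (Finset.range_subset_range.2 (by omega)) fun m _ hm => by
      rw [hTsup l m (by simp at hm; omega), zero_mul]
  have hlast : T l (N + 1) * eval x (B (N + 1)) = if l = N then eval x (B (N + 1)) else 0 := by
    split_ifs with h
    · rw [h, hT1, one_mul]
    · rw [hTsup l (N + 1) (by omega), zero_mul]
  rw [hrow, hextend, Finset.sum_range_succ _ (N + 1), hlast, add_sub_cancel_right]

theorem X_mul_eq_sum_range_of_add_le {A : ℕ → ℝ[X]} (hT1 : ∀ n, T n (n + 1) = 1)
    (hTsup : ∀ n m, n + 1 < m → T n m = 0) (hTsub : ∀ n m, m + p < n → T n m = 0)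
    (hArec : ∀ n : ℕ, (if n = 0 then 0 else A (n - 1))
        + ∑ i ∈ Finset.range (p + 1), C (T (n + i) n) * A (n + i) = X * A n)
    {m L : ℕ} (hmL : m + p ≤ L) :
    X * A m = ∑ l ∈ Finset.range (L + 1), C (T l m) * A l := by
  have hhead : ∑ l ∈ Finset.range m, C (T l m) * A l = if m = 0 then 0 else A (m - 1) := by
    rcases Nat.eq_zero_or_pos m with rfl | hm
    · simp
    rw [if_neg hm.ne', Finset.sum_eq_single_of_mem (m - 1) (by simpa using hm)]
    · rw [show T (m - 1) m = 1 by simpa [Nat.sub_add_cancel hm] using hT1 (m - 1), map_one, one_mul]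
    · intro l _ hl
      rw [hTsup l m (by simp only [Finset.mem_range] at *; omega), map_zero, zero_mul]
  have htail : ∑ l ∈ Finset.Ico m (L + 1), C (T l m) * A l
      = ∑ i ∈ Finset.range (p + 1), C (T (m + i) m) * A (m + i) := by
    rw [Finset.sum_Ico_eq_sum_range]
    refine (Finset.sum_subset (Finset.range_subset_range.2 (by omega)) fun i hi hip => ?_).symm
    rw [hTsub (m + i) m (by simp at hip; omega), map_zero, zero_mul]
  rw [← Finset.sum_range_add_sum_Ico _ (by omega : m ≤ L + 1), hhead, htail, hArec]

end Recurrences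

section Casoratian

variable {p : ℕ} {A : Fin p → ℕ → ℝ[X]}

theorem Qp_eq_cramer (hp : 1 ≤ p) (n N : ℕ) :
    Qp p A n N = cramer (of fun i a : Fin p => A a (N + i))ᵀ (fun a => A a n) ⟨0, hp⟩ := by
  rw [cramer_transpose_apply, Qp]
  congr 1
  ext i a
  by_cases hi : i = ⟨0, hp⟩
  · simp [hi]
  · have hi' : (i : ℕ) ≠ 0 := fun h => hi (Fin.ext h)
    simp [updateRow_ne hi, hi']

theorem sum_mul_Qp_eq (hp : 1 ≤ p) {s : Finset ℕ} {c : ℕ → ℝ[X]} {f : ℝ[X]} {m : ℕ}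
    (h : ∀ a, ∑ l ∈ s, c l * A a l = f * A a m) (N : ℕ) :
    ∑ l ∈ s, c l * Qp p A l N = f * Qp p A m N := by
  have hrow : ∑ l ∈ s, c l • (fun a => A a l) = f • fun a => A a m := by
    funext a
    simpa only [Finset.sum_apply, Pi.smul_apply, smul_eq_mul] using h a
  simp only [Qp_eq_cramer hp]
  rw [← smul_eq_mul f, ← Pi.smul_apply, ← map_smul, ← hrow, map_sum]
  simp

theorem Qp_eq_zero_of_lt_of_lt {b N : ℕ} (hNb : N < b) (hbN : b < N + p) : Qp p A b N = 0 := by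
  apply det_zero_of_row_eq (i := ⟨0, by omega⟩) (j := ⟨b - N, by omega⟩)
  · simp [Fin.ext_iff]; omega
  · ext a
    simp [show b - N ≠ 0 by omega, show N + (b - N) = b by omega]

theorem sum_eval_Qp_mul_eq_of_le (hp : 1 ≤ p) {T : ℕ → ℕ → ℝ} (hT1 : ∀ n, T n (n + 1) = 1)
    (hTsup : ∀ n m, n + 1 < m → T n m = 0) (hTsub : ∀ n m, m + p < n → T n m = 0)
    (hArec : ∀ a : Fin p, ∀ n : ℕ, (if n = 0 then 0 else A a (n - 1))
        + ∑ i ∈ Finset.range (p + 1), C (T (n + i) n) * A a (n + i) = X * A a n)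
    {N m : ℕ} (hm : m ≤ N) (y : ℝ) :
    ∑ l ∈ Finset.range (N + 1), eval y (Qp p A l N) * T l m
      = y * eval y (Qp p A m N) - if m = N then T (N + p) N * eval y (Qp p A (N + p) N) else 0 := by
  have hcol := congrArg (eval y) <| sum_mul_Qp_eq hp (m := m) (s := Finset.range (N + p + 1))
    (fun a => (X_mul_eq_sum_range_of_add_le hT1 hTsup hTsub (hArec a) (by omega)).symm) N
  simp only [eval_finsetSum, eval_mul, eval_C, eval_X] at hcol
  have htail : ∑ l ∈ Finset.Ico (N + 1) (N + p + 1), T l m * eval y (Qp p A l N)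
      = if m = N then T (N + p) N * eval y (Qp p A (N + p) N) else 0 := by
    rw [Finset.sum_eq_single_of_mem (N + p) (by simp; omega)]
    · split_ifs with h
      · rw [h]
      · rw [hTsub (N + p) m (by omega), zero_mul]
    · intro l hl hne
      simp only [Finset.mem_Ico] at hl
      rw [Qp_eq_zero_of_lt_of_lt (by omega) (by omega), eval_zero, mul_zero]
  rw [← Finset.sum_range_add_sum_Ico _ (by omega : N + 1 ≤ N + p + 1), htail] at hcol
  rw [← hcol, add_sub_cancel_right]
  exact Finset.sum_congr rfl fun l _ => mul_comm _ _

end Casoratian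

section ChristoffelDarboux

variable {N : ℕ} {M : ℕ → ℕ → ℝ} {b q : ℕ → ℝ[X]} {r : ℝ[X]} {c : ℝ}

theorem sum_eval_mul_eval_eq_zero
    (hb : ∀ x, ∀ l ≤ N, ∑ m ∈ Finset.range (N + 1), M l m * eval x (b m)
      = x * eval x (b l) - if l = N then eval x (b (N + 1)) else 0)
    (hq : ∀ y, ∀ m ≤ N, ∑ l ∈ Finset.range (N + 1), eval y (q l) * M l m
      = y * eval y (q m) - if m = N then c * eval y r else 0)
    {x y : ℝ} (hxy : x ≠ y) (hx : eval x (b (N + 1)) = 0) (hy : eval y r = 0) :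
    ∑ l ∈ Finset.range (N + 1), eval y (q l) * eval x (b l) = 0 := by
  have h := sub_mul_sum_mul_eq_of_eigen (hb x) (hq y)
  rw [hx, hy, mul_zero, mul_zero, zero_mul, sub_zero] at h
  exact (mul_eq_zero.mp h).resolve_left (sub_ne_zero.mpr hxy)

theorem eval_eq_zero_of_isRoot
    (hb : ∀ x, ∀ l ≤ N, ∑ m ∈ Finset.range (N + 1), M l m * eval x (b m)
      = x * eval x (b l) - if l = N then eval x (b (N + 1)) else 0)
    (hq : ∀ y, ∀ m ≤ N, ∑ l ∈ Finset.range (N + 1), eval y (q l) * M l m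
      = y * eval y (q m) - if m = N then c * eval y r else 0)
    (hc : c ≠ 0) {y : ℝ} (hy : (b (N + 1)).IsRoot y)
    (hden : ∑ l ∈ Finset.range (N + 1), eval y (q l) * eval y (b l) ≠ 0) :
    eval y r = 0 := by
  have hconfluent : C c * r * b N = q N * b (N + 1) := Polynomial.funext fun x => by
    have h := sub_mul_sum_mul_eq_of_eigen (hb x) (hq x)
    simp only [sub_self, zero_mul] at h
    simp only [eval_mul, eval_C]
    linear_combination h
  have hcd : (X - C y) * ∑ l ∈ Finset.range (N + 1), C (eval y (q l)) * b l
      = C (eval y (q N)) * b (N + 1) - C (c * eval y r) * b N := Polynomial.funext fun x => by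
    simpa [eval_finsetSum] using sub_mul_sum_mul_eq_of_eigen (hb x) (hq y)
  -- If `r` did not vanish at `y`, neither would `c * r`, so `b N` would vanish there too; the
  -- derivatives of the two identities at `y` then add up to the vanishing of `hden`'s sum.
  by_contra hr
  have hbN : eval y (b N) = 0 := by
    have h := congrArg (eval y) hconfluent
    simp only [eval_mul, eval_C, hy.eq_zero, mul_zero] at h
    exact (mul_eq_zero.mp h).resolve_left (mul_ne_zero hc hr)
  have hconfluent' := congrArg (fun f => eval y (derivative f)) hconfluent
  have hcd' := congrArg (fun f => eval y (derivative f)) hcd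
  simp only [derivative_mul, derivative_C, eval_add, eval_mul, eval_C, hbN, hy.eq_zero, zero_mul,
    mul_zero, zero_add] at hconfluent'
  simp only [derivative_mul, derivative_sub, derivative_X, derivative_C, eval_add, eval_mul,
    eval_sub, eval_X, eval_C, eval_finsetSum, sub_self, sub_zero, one_mul, zero_mul,
    add_zero] at hcd'
  exact hden (by rw [hcd', ← hconfluent', sub_self])

end ChristoffelDarboux

noncomputable def evalMatrix {N : ℕ} (B : ℕ → ℝ[X]) (lam : Fin (N + 1) → ℝ) :
    Matrix (Fin (N + 1)) (Fin (N + 1)) ℝ :=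
  of fun l k => eval (lam k) (B l)

noncomputable def weightMatrix (p : ℕ) (A : Fin p → ℕ → ℝ[X]) (B : ℕ → ℝ[X]) (N : ℕ)
    (lam : Fin (N + 1) → ℝ) : Matrix (Fin (N + 1)) (Fin (N + 1)) ℝ :=
  of fun k j => wfun p A B N lam k j

section Spectral

variable {N : ℕ} {lam : Fin (N + 1) → ℝ} {B : ℕ → ℝ[X]}

theorem truncM_mul_evalMatrix {T : ℕ → ℕ → ℝ}
    (hb : ∀ x, ∀ l ≤ N, ∑ m ∈ Finset.range (N + 1), T l m * eval x (B m)
      = x * eval x (B l) - if l = N then eval x (B (N + 1)) else 0)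
    (hroots : ∀ k, eval (lam k) (B (N + 1)) = 0) :
    truncM T N * evalMatrix B lam = evalMatrix B lam * diagonal lam := by
  ext l k
  rw [mul_apply, mul_diagonal]
  simp only [truncM, evalMatrix, of_apply]
  rw [Fin.sum_univ_eq_sum_range (fun m => T l m * eval (lam k) (B m)), hb _ l (by omega),
    hroots, ite_self, sub_zero, mul_comm]

variable {p : ℕ} {A : Fin p → ℕ → ℝ[X]}

theorem weightMatrix_mul_evalMatrix {T : ℕ → ℕ → ℝ}
    (hb : ∀ x, ∀ l ≤ N, ∑ m ∈ Finset.range (N + 1), T l m * eval x (B m)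
      = x * eval x (B l) - if l = N then eval x (B (N + 1)) else 0)
    (hq : ∀ y, ∀ m ≤ N, ∑ l ∈ Finset.range (N + 1), eval y (Qp p A l N) * T l m
      = y * eval y (Qp p A m N) - if m = N then T (N + p) N * eval y (Qp p A (N + p) N) else 0)
    (hr : ∀ k, eval (lam k) (Qp p A (N + p) N) = 0) (hroots : ∀ k, eval (lam k) (B (N + 1)) = 0)
    (hlam : Function.Injective lam)
    (hden : ∀ k, ∑ l ∈ Finset.range (N + 1), eval (lam k) (Qp p A l N) * eval (lam k) (B l) ≠ 0) :
    weightMatrix p A B N lam * evalMatrix B lam = 1 := by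
  ext k k'
  simp only [mul_apply, weightMatrix, evalMatrix, of_apply, wfun, div_mul_eq_mul_div,
    ← Finset.sum_div, one_apply]
  rw [Fin.sum_univ_eq_sum_range (fun j => eval (lam k) (Qp p A j N) * eval (lam k') (B j))]
  split_ifs with hkk
  · rw [hkk, div_self (hden k')]
  · rw [sum_eval_mul_eval_eq_zero hb hq (fun h => hkk (hlam h).symm) (hroots k') (hr k), zero_div]

theorem weightMatrix_mulVec_enu (a : Fin p) :
    weightMatrix p A B N lam *ᵥ enu p A N a = fun k => mu p A B N lam k a := by
  ext k
  let g : ℕ → ℝ := fun j => if h : j < p then (nuMat p A)⁻¹ a ⟨j, h⟩ else 0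
  have hf : ∀ j, N < j → j < p → wfun p A B N lam k j = 0 := fun j hNj hjp => by
    rw [wfun, Qp_eq_zero_of_lt_of_lt hNj (by omega), eval_zero, zero_div]
  have hg : ∀ j, p ≤ j → g j = 0 := fun j hj => dif_neg (by omega)
  calc (weightMatrix p A B N lam *ᵥ enu p A N a) k
      = ∑ j : Fin (N + 1), wfun p A B N lam k j * g j := rfl
    _ = ∑ j : Fin p, wfun p A B N lam k j * g j := sum_fin_mul_eq_sum_fin_mul _ g hf hg
    _ = mu p A B N lam k a := by
      simp only [mu, g, Fin.is_lt, dif_pos, Fin.eta, mul_comm]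

end Spectral

theorem stmt_16_general
    (p : ℕ) (hp : 1 ≤ p)
    (T : ℕ → ℕ → ℝ)
    (hT1 : ∀ n, T n (n + 1) = 1)
    (hTsup : ∀ n m, n + 1 < m → T n m = 0)
    (hTsub : ∀ n m, m + p < n → T n m = 0)
    (hTlow : ∀ n, p ≤ n → T n (n - p) ≠ 0)
    (B : ℕ → Polynomial ℝ)
    (hB0 : B 0 = 1)
    (hBrec : ∀ n, B (n + 1) = (X - C (T n n)) * B n
      - ∑ j ∈ Finset.Icc 1 p, (if j ≤ n then C (T n (n - j)) * B (n - j) else 0))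
    (A : Fin p → ℕ → Polynomial ℝ)
    (hArec : ∀ a : Fin p, ∀ n : ℕ,
      (if n = 0 then 0 else A a (n - 1))
        + ∑ i ∈ Finset.range (p + 1), C (T (n + i) n) * A a (n + i) = X * A a n)
    (N : ℕ) (lam : Fin (N + 1) → ℝ)
    (hroots : ∀ k, eval (lam k) (B (N + 1)) = 0)
    (hanti : StrictAnti lam)
    (hden : ∀ k : Fin (N + 1), ∑ l ∈ Finset.range (N + 1),
      eval (lam k) (Qp p A l N) * eval (lam k) (B l) ≠ 0) :
    ∀ (n : ℕ) (a : Fin p),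
      ∑ k : Fin (N + 1), mu p A B N lam k a * (lam k) ^ n
        = Matrix.mulVec ((truncM T N) ^ n) (enu p A N a) 0 := by
  intro n a
  have hc : T (N + p) N ≠ 0 := by simpa using hTlow (N + p) (by omega)
  have hb := fun x l (hl : l ≤ N) => sum_mul_eval_eq_of_le hT1 hTsup hTsub hBrec hl x
  have hq := fun y m (hm : m ≤ N) => sum_eval_Qp_mul_eq_of_le hp hT1 hTsup hTsub hArec hm y
  have hr k : eval (lam k) (Qp p A (N + p) N) = 0 :=
    eval_eq_zero_of_isRoot hb hq hc (hroots k) (hden k)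
  have hV0 k : evalMatrix B lam 0 k = 1 := by simp [evalMatrix, hB0]
  rw [pow_mulVec_apply_eq_sum (truncM_mul_evalMatrix hb hroots)
    (weightMatrix_mul_evalMatrix hb hq hr hroots hanti.injective hden) hV0,
    weightMatrix_mulVec_enu]

theorem stmt_16
    (p : ℕ) (hp : 1 ≤ p)
    (T : ℕ → ℕ → ℝ)
    (hT1 : ∀ n, T n (n + 1) = 1)
    (hTsup : ∀ n m, n + 1 < m → T n m = 0)
    (hTsub : ∀ n m, m + p < n → T n m = 0)
    (hTlow : ∀ n, p ≤ n → T n (n - p) ≠ 0)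
    (B : ℕ → Polynomial ℝ)
    (hB0 : B 0 = 1)
    (hBrec : ∀ n, B (n + 1) = (X - C (T n n)) * B n
      - ∑ j ∈ Finset.Icc 1 p, (if j ≤ n then C (T n (n - j)) * B (n - j) else 0))
    (A : Fin p → ℕ → Polynomial ℝ)
    (hAconst : ∀ a : Fin p, ∀ j < p, ∃ c : ℝ, A a j = C c)
    (hAzero : ∀ a : Fin p, ∀ j : ℕ, j < (a : ℕ) → A a j = 0)
    (hAone : ∀ a : Fin p, A a (a : ℕ) = 1)
    (hArec : ∀ a : Fin p, ∀ n : ℕ,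
      (if n = 0 then 0 else A a (n - 1))
        + ∑ i ∈ Finset.range (p + 1), C (T (n + i) n) * A a (n + i) = X * A a n)
    (N : ℕ) (lam : Fin (N + 1) → ℝ)
    (hroots : ∀ k, eval (lam k) (B (N + 1)) = 0)
    (hanti : StrictAnti lam)
    (hsimple : ∀ k, eval (lam k) (derivative (B (N + 1))) ≠ 0)
    (hden : ∀ k : Fin (N + 1), ∑ l ∈ Finset.range (N + 1),
      eval (lam k) (Qp p A l N) * eval (lam k) (B l) ≠ 0) :
    ∀ (n : ℕ) (a : Fin p),
      ∑ k : Fin (N + 1), mu p A B N lam k a * (lam k) ^ n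
        = Matrix.mulVec ((truncM T N) ^ n) (enu p A N a) 0 :=
  stmt_16_general p hp T hT1 hTsup hTsub hTlow B hB0 hBrec A hArec N lam hroots hanti hden
end
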